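/- Let M, a, s be positive integers with M > 1 such that ∑_{i=0}^{M-1} (a+i)^2 = s^2. If M = 24·m₁ + 9 for a nonnegative integer m₁, then m₁ ≢ 2 (mod 3). -/

import Mathlib

open Finset

/-- Any three consecutive squares in `ZMod 3` are `0, 1, 1` in some order. -/
lemma sum_range_three_mul_add_sq_zmod_three (a : ZMod 3) (n : ℕ) :
    ∑ i ∈ range (3 * n), (a + i) ^ 2 = 2 * n := by
  induction n with
  | zero => simp
  | succ n ih =>
    rw [show 3 * (n + 1) = 3 * n + 1 + 1 + 1 by ring, sum_range_succ, sum_range_succ,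
      sum_range_succ, ih]
    push_cast
    have h3 : (3 : ZMod 3) = 0 := rfl
    linear_combination (1 + a ^ 2 + 6 * (n : ZMod 3) + 6 * n * a + 9 * n ^ 2 + 2 * a) * h3

lemma zmod_three_sq_ne_two : ∀ x : ZMod 3, x ^ 2 ≠ 2 := by decide

theorem stmt_general (M a s m₁ : ℕ)
    (hsum : ∑ i ∈ Finset.range M, (a + i) ^ 2 = s ^ 2)
    (hMeq : M = 24 * m₁ + 9) :
    ¬ m₁ % 3 = 2 := by
  intro hm
  have hm₁ : (m₁ : ZMod 3) = 2 := by rw [← ZMod.natCast_mod, hm]; rfl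
  have hsum₃ := congrArg (Nat.cast : ℕ → ZMod 3) hsum
  push_cast at hsum₃
  rw [show M = 3 * (8 * m₁ + 3) by omega, sum_range_three_mul_add_sq_zmod_three] at hsum₃
  apply zmod_three_sq_ne_two s
  rw [← hsum₃]
  push_cast
  rw [hm₁]
  decide

theorem stmt (M a s m₁ : ℕ) (hM : 1 < M) (ha : 1 ≤ a) (hs : 1 ≤ s)
    (hsum : ∑ i ∈ Finset.range M, (a + i) ^ 2 = s ^ 2)
    (hMeq : M = 24 * m₁ + 9) :
    ¬ m₁ % 3 = 2 :=
  stmt_general M a s m₁ hsum hMeq
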